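/- arXiv:1302.2504 — 5 statements merged into one kernel-verified Lean document; each statement's English description precedes it below -/
import Mathlib

section
/- For integers 1 ≤ j ≤ n, the determinant of the (n-j+2)×(n-j+2) upper-Hessenberg matrix with columns given by Stirling numbers of the second kind {j, ·}, {j+1, ·}, ..., {n-1, ·} and last column {n, ·} shifted by one (rows indexed starting at j-1, last column entries {n,j}, {n,j+1}, ..., {n,n}) equals (-1)^{n-j+1} C(n, j-1). -/
/-- Stirling numbers of the second kind. -/
def stirling2 : ℕ → ℕ → ℕ
  | 0, 0 => 1
  | 0, _ + 1 => 0
  | _ + 1, 0 => 0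
  | n + 1, k + 1 => (k + 1) * stirling2 n (k + 1) + stirling2 n k

lemma stirling2_eq_zero {n k : ℕ} (h : n < k) : stirling2 n k = 0 := by
  induction n generalizing k with
  | zero => obtain ⟨k, rfl⟩ : ∃ m, k = m + 1 := ⟨k - 1, by omega⟩; rfl
  | succ n ih =>
    obtain ⟨k, rfl⟩ : ∃ m, k = m + 1 := ⟨k - 1, by omega⟩
    rw [stirling2, ih (by omega), ih (by omega)]; ring

lemma stirling2_self (n : ℕ) : stirling2 n n = 1 := by
  induction n with
  | zero => rfl
  | succ n ih => rw [stirling2, ih, stirling2_eq_zero (by omega)]; ring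

lemma stirling2_zero (n : ℕ) : stirling2 (n + 1) 0 = 0 := rfl

lemma stirling2_one (n : ℕ) : stirling2 (n + 1) 1 = 1 := by
  induction n with
  | zero => rfl
  | succ n ih => show 1 * stirling2 (n+1) 1 + stirling2 (n+1) 0 = 1; rw [ih, stirling2_zero]

lemma stirling2_eq_sum_choose (n : ℕ) : ∀ k : ℕ,
    stirling2 (n + 1) (k + 1) = ∑ m ∈ Finset.range (n + 1), n.choose m * stirling2 m k := by
  induction n with
  | zero => intro k; show (k+1) * stirling2 0 (k+1) + stirling2 0 k = _
            rw [stirling2_eq_zero (by omega)]; simp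
  | succ n ih =>
    intro k
    rw [Finset.sum_range_succ']
    simp only [Nat.choose_succ_succ, add_mul, Finset.sum_add_distrib, Nat.succ_eq_add_one]
    have h2 : ∑ x ∈ Finset.range (n + 1), n.choose (x + 1) * stirling2 (x + 1) k +
        (n + 1).choose 0 * stirling2 0 k = stirling2 (n + 1) (k + 1) := by
      rw [ih k, Nat.choose_zero_right, one_mul]
      have e1 := Finset.sum_range_succ' (fun m => n.choose m * stirling2 m k) (n + 1)
      rw [Finset.sum_range_succ, Nat.choose_succ_self, zero_mul, add_zero,
        Nat.choose_zero_right, one_mul] at e1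
      exact e1.symm
    cases k with
    | zero =>
      have hz : ∀ x ∈ Finset.range (n+1), n.choose x * stirling2 (x+1) 0 = 0 := by
        intro x _; rw [stirling2_zero, mul_zero]
      rw [Finset.sum_eq_zero hz]
      simp only [show stirling2 0 0 = 1 from rfl, Nat.choose_zero_right, mul_one, one_mul,
        zero_add, Nat.zero_add] at h2 ⊢
      have h5 : stirling2 (n + 1 + 1) 1 = 1 := stirling2_one (n+1)
      have h6 : stirling2 (n + 1) 1 = 1 := stirling2_one n
      linarith [h2]
    | succ k' =>
      have h4 : ∀ x ∈ Finset.range (n+1), n.choose x * stirling2 (x+1) (k'+1)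
          = (k' + 1) * (n.choose x * stirling2 x (k'+1)) + n.choose x * stirling2 x k' := by
        intro x _
        show n.choose x * ((k' + 1) * stirling2 x (k' + 1) + stirling2 x k') = _
        ring
      rw [Finset.sum_congr rfl h4, Finset.sum_add_distrib, ← Finset.mul_sum, ← ih (k'+1),
        ← ih k']
      have hL : stirling2 (n + 1 + 1) (k' + 1 + 1)
          = (k' + 1 + 1) * stirling2 (n + 1) (k' + 1 + 1) + stirling2 (n + 1) (k' + 1) := rfl
      linarith [h2, hL]

lemma stirling2_split (N k : ℕ) (hk : k ≤ N) :
    stirling2 (N + 1) (k + 1)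
      = N.choose k + ∑ i ∈ Finset.range (N - k),
          N.choose (k + 1 + i) * stirling2 (k + 1 + i) k := by
  rw [stirling2_eq_sum_choose]
  have hNk : N + 1 = k + (N - k + 1) := by omega
  rw [hNk, Finset.sum_range_add]
  have hz : ∑ m ∈ Finset.range k, N.choose m * stirling2 m k = 0 :=
    Finset.sum_eq_zero fun m hm => by
      rw [stirling2_eq_zero (Finset.mem_range.mp hm), mul_zero]
  rw [hz, zero_add, Finset.sum_range_succ']
  simp only [add_zero, stirling2_self, mul_one]
  rw [add_comm]
  congr 1
  apply Finset.sum_congr rfl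
  intro i _
  congr 2 <;> omega

/-- row offset function -/
def rowOff (j a sv : ℕ) : ℕ := if sv = 0 then a else j - 1 + sv

/-- entry function of the generalized matrix -/
def gent (d j a : ℕ) (sv tv : ℕ) : ℤ :=
  if tv = d + 1 then (stirling2 (j + d + 1) (rowOff j a sv + 1) : ℤ)
  else (stirling2 (j + tv) (rowOff j a sv) : ℤ)

lemma keyG (d : ℕ) : ∀ j a : ℕ, 1 ≤ j →
    (Matrix.of fun s t : Fin (d + 2) => gent d j a (s : ℕ) (t : ℕ)).det
      = (-1) ^ (d + 1) *
          ((stirling2 (j + d + 1) (a + 1) : ℤ)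
            - ∑ i ∈ Finset.range (d + 1),
                (Nat.choose (j + d) (j + i) : ℤ) * (stirling2 (j + i) a : ℤ)) := by
  induction d with
  | zero =>
    intro j a hj
    rw [Matrix.det_fin_two]
    simp only [Matrix.of_apply, gent, rowOff, Fin.val_zero, Fin.val_one]
    norm_num
    rw [show j - 1 + 1 = j from by omega, stirling2_self, stirling2_self]
    push_cast
    ring
  | succ d ih =>
    intro j a hj
    set N : Matrix (Fin (d + 3)) (Fin (d + 3)) ℤ :=
      Matrix.of fun s t : Fin (d + 1 + 2) => gent (d + 1) j a (s : ℕ) (t : ℕ) with hN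
    show N.det = _
    have hcol : ∀ r r' : ℕ, r = r' → ∀ tv : ℕ,
        (if tv + 1 = d + 1 + 1 then (stirling2 (j + (d + 1) + 1) (r + 1) : ℤ)
          else (stirling2 (j + (tv + 1)) r : ℤ))
        = (if tv = d + 1 then (stirling2 (j + 1 + d + 1) (r' + 1) : ℤ)
            else (stirling2 (j + 1 + tv) r' : ℤ)) := by
      rintro r r' rfl tv
      rcases eq_or_ne tv (d + 1) with ht | ht
      · rw [if_pos (by omega), if_pos ht, show j + (d + 1) + 1 = j + 1 + d + 1 from by omega]
      · rw [if_neg (by omega), if_neg ht, show j + (tv + 1) = j + 1 + tv from by omega]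
    have hrow : ∀ sv : ℕ, rowOff j a (sv + 1) = rowOff (j + 1) j sv := by
      intro sv
      rw [rowOff, rowOff, if_neg (Nat.succ_ne_zero sv)]
      rcases eq_or_ne sv 0 with hs | hs
      · rw [if_pos hs]; omega
      · rw [if_neg hs]; omega
    have hsub0 : N.submatrix ((0 : Fin (d + 3)).succAbove) Fin.succ
        = Matrix.of fun s t : Fin (d + 2) => gent d (j + 1) j (s : ℕ) (t : ℕ) := by
      ext s t
      simp only [Matrix.submatrix_apply, Fin.succAbove_zero, Matrix.of_apply, Fin.val_succ, hN]
      rw [show gent (d+1) j a ((s:ℕ)+1) ((t:ℕ)+1)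
          = gent d (j+1) j (s:ℕ) (t:ℕ) from by
        unfold gent; rw [hrow]; exact hcol _ _ rfl _]
    have hsub1 : N.submatrix ((1 : Fin (d + 3)).succAbove) Fin.succ
        = Matrix.of fun s t : Fin (d + 2) => gent d (j + 1) a (s : ℕ) (t : ℕ) := by
      ext s t
      simp only [Matrix.submatrix_apply, Matrix.of_apply, Fin.val_succ, hN]
      have hval : (((1 : Fin (d + 3)).succAbove s : Fin (d + 3)) : ℕ)
          = if (s : ℕ) = 0 then 0 else (s : ℕ) + 1 := by
        rcases eq_or_ne (s : ℕ) 0 with hs | hs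
        · have : s = 0 := Fin.ext hs
          subst this
          rw [Fin.succAbove_of_castSucc_lt _ _ (by simp [Fin.lt_def])]
          simp [hs]
        · rw [Fin.succAbove_of_le_castSucc _ _ (by
            simp only [Fin.le_def, Fin.coe_castSucc, Fin.val_one]; omega)]
          simp [hs]
      rw [hval]
      rcases eq_or_ne (s : ℕ) 0 with hs | hs
      · rw [if_pos hs, hs]
        unfold gent
        exact hcol _ _ (by simp [rowOff]) _
      · rw [if_neg hs]
        unfold gent
        exact hcol _ _ (by rw [rowOff, rowOff, if_neg (by omega), if_neg hs]; omega) _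
    have h00 : N 0 0 = (stirling2 j a : ℤ) := by
      show gent (d + 1) j a ((0 : Fin (d+3)) : ℕ) ((0 : Fin (d+3)) : ℕ) = _
      rw [Fin.val_zero, gent, if_neg (by omega), rowOff, if_pos rfl, Nat.add_zero]
    have h10 : N 1 0 = 1 := by
      show gent (d + 1) j a ((1 : Fin (d+3)) : ℕ) ((0 : Fin (d+3)) : ℕ) = _
      rw [Fin.val_zero, Fin.val_one, gent, if_neg (by omega), rowOff, if_neg (by omega),
        Nat.add_zero, show j - 1 + 1 = j from by omega, stirling2_self, Nat.cast_one]
    have htail : ∀ i : Fin (d + 1), N i.succ.succ 0 = 0 := by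
      intro i
      show gent (d + 1) j a ((i.succ.succ : Fin (d+3)) : ℕ) ((0 : Fin (d+3)) : ℕ) = _
      rw [Fin.val_zero, Fin.val_succ, Fin.val_succ, gent, if_neg (by omega), rowOff,
        if_neg (by omega), Nat.add_zero, stirling2_eq_zero (by omega), Nat.cast_zero]
    rw [Matrix.det_succ_column_zero, Fin.sum_univ_succ, Fin.sum_univ_succ]
    simp only [Fin.succ_zero_eq_one]
    simp only [htail, mul_zero, zero_mul, Finset.sum_const_zero, add_zero]
    rw [h00, h10, hsub0, hsub1, ih (j+1) j (by omega), ih (j+1) a (by omega)]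
    simp only [Fin.val_zero, Fin.val_one, pow_zero, pow_one, one_mul, mul_one]
    rw [show j + (d + 1) = j + 1 + d from by omega]
    rw [Finset.sum_range_succ'
      (fun i => ((Nat.choose (j+1+d) (j+i) : ℤ) * (stirling2 (j+i) a : ℤ))) (d+1)]
    have hTB : (∑ i ∈ Finset.range (d+1),
          (((j+1+d).choose (j+(i+1)) : ℤ) * (stirling2 (j+(i+1)) a : ℤ)))
        = ∑ i ∈ Finset.range (d+1),
            (((j+1+d).choose (j+1+i) : ℤ) * (stirling2 (j+1+i) a : ℤ)) :=
      Finset.sum_congr rfl fun i _ => by rw [show j + (i + 1) = j + 1 + i from by omega]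
    rw [hTB]
    simp only [Nat.add_zero]
    have hsp := stirling2_split (j + 1 + d) j (by omega)
    rw [show j + 1 + d - j = d + 1 from by omega] at hsp
    have hZ := congrArg (fun x : ℕ => (x : ℤ)) hsp
    push_cast at hZ
    rw [hZ]
    ring

/-- determinantal identity for Stirling numbers of the second kind.
The `(n+2-j)×(n+2-j)` upper-Hessenberg matrix with columns `{j,·},…,{n,·}` and last
column `{n+1,·}` shifted by one has determinant `(-1)^{n-j+1} C(n, j-1)`. -/
theorem stmt3 (n j : ℕ) (hj1 : 1 ≤ j) (hj2 : j ≤ n) :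
    (Matrix.of fun s t : Fin (n+2-j) =>
        (if (t : ℕ) = n + 1 - j then (stirling2 (n+1) (j + (s : ℕ)) : ℤ)
          else (stirling2 (j + (t : ℕ)) (j - 1 + (s : ℕ)) : ℤ))).det
      = (-1 : ℤ) ^ (n - j + 1) * (Nat.choose n (j - 1) : ℤ) := by
  obtain ⟨d, rfl⟩ : ∃ d, n = j + d := ⟨n - j, by omega⟩
  rw [show j + d + 2 - j = d + 2 from by omega,
    show j + d + 1 - j = d + 1 from by omega,
    show j + d - j = d from by omega]
  have hM : (Matrix.of fun s t : Fin (d+2) =>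
        (if (t : ℕ) = d + 1 then (stirling2 (j+d+1) (j + (s : ℕ)) : ℤ)
          else (stirling2 (j + (t : ℕ)) (j - 1 + (s : ℕ)) : ℤ)))
      = Matrix.of fun s t : Fin (d+2) => gent d j (j-1) (s : ℕ) (t : ℕ) := by
    ext s t
    simp only [Matrix.of_apply, gent]
    have hr : rowOff j (j-1) (s : ℕ) = j - 1 + (s : ℕ) := by
      rw [rowOff]; rcases eq_or_ne (s:ℕ) 0 with hs | hs
      · rw [if_pos hs]; omega
      · rw [if_neg hs]
    rw [hr, show j - 1 + (s:ℕ) + 1 = j + (s:ℕ) from by omega]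
  rw [hM, keyG d j (j-1) hj1]
  rw [show j - 1 + 1 = j from by omega]
  have hsp := stirling2_split (j + d) (j - 1) (by omega)
  rw [show j + d - (j - 1) = d + 1 from by omega,
    show j - 1 + 1 = j from by omega] at hsp
  have hZ := congrArg (fun x : ℕ => (x : ℤ)) hsp
  push_cast at hZ
  rw [hZ]
  ring
end

section
/- Let x_1,...,x_n be pairwise distinct elements of a field, and let V be the n×n Vandermonde matrix with (i,j) entry x_i^{j-1}. Then the (i,j) entry of V^{-1} is w_{ij} = (-1)^{n-i} e_{n-i}(x_1,...,x̂_j,...,x_n) / ∏_{k≠j} (x_j - x_k). -/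
/-- The `k`-th elementary symmetric polynomial of `x_0, …, x_{m-1}`. -/
def esymmAux {R : Type*} [CommRing R] {m : ℕ} (x : Fin m → R) (k : ℕ) : R :=
  ∑ s ∈ Finset.powersetCard k Finset.univ, ∏ i ∈ s, x i

/-!
Column `j` of `V⁻¹` is the coefficient vector of the Lagrange basis polynomial
`L_j = ∏_{k ≠ j} (X - x_k) / ∏_{k ≠ j} (x_j - x_k)`,
because `∑_i x_a^i (coeff_i L_b) = L_b(x_a) = δ_{ab}`.
By Vieta's formulas, the coefficient of `X^i` in `∏_{k ≠ j} (X - x_k)`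
is `(-1)^{n-i} e_{n-i}(x̂_j)`.
-/

open Finset Polynomial Lagrange Matrix

lemma Fin.univ_erase_eq_map_succAboveEmb {n : ℕ} (j : Fin (n + 1)) :
    (univ : Finset (Fin (n + 1))).erase j = univ.map j.succAboveEmb := by
  conv_lhs => rw [Fin.univ_succAbove n j]
  rw [erase_cons]

lemma esymmAux_eq_esymm {R : Type*} [CommRing R] {m : ℕ} (x : Fin m → R) (k : ℕ) :
    esymmAux x k = (univ.val.map x).esymm k :=
  (esymm_map_val x univ k).symm

lemma esymmAux_comp_succAbove {R : Type*} [CommRing R] {n : ℕ} (x : Fin (n + 1) → R)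
    (j : Fin (n + 1)) (k : ℕ) :
    esymmAux (x ∘ j.succAbove) k = ((univ.erase j).val.map x).esymm k := by
  rw [esymmAux_eq_esymm, Fin.univ_erase_eq_map_succAboveEmb, map_val, Multiset.map_map]
  rfl

lemma Lagrange.coeff_nodal_univ_erase {R : Type*} [CommRing R] {n : ℕ} (x : Fin (n + 1) → R)
    (j : Fin (n + 1)) {p : ℕ} (hp : p ≤ n) :
    (nodal (univ.erase j) x).coeff p = (-1) ^ (n - p) * esymmAux (x ∘ j.succAbove) (n - p) := by
  have hcard : Multiset.card ((univ.erase j).val.map x) = n := by simp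
  have hmap : (univ.erase j).val.map (fun k => X - C (x k)) =
      ((univ.erase j).val.map x).map (fun t => X - C t) := by
    rw [Multiset.map_map]; rfl
  rw [nodal_eq, prod_eq_multiset_prod, hmap, Multiset.prod_X_sub_C_coeff _ (hcard.symm ▸ hp),
    hcard, esymmAux_comp_succAbove]

lemma Lagrange.basis_eq_C_nodalWeight_mul_nodal_erase {F ι : Type*} [Field F] [DecidableEq ι]
    (s : Finset ι) (v : ι → F) (i : ι) :
    Lagrange.basis s v i = C (nodalWeight s v i) * nodal (s.erase i) v := by
  simp_rw [Lagrange.basis, basisDivisor, nodalWeight, prod_mul_distrib, map_prod, nodal]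

lemma Matrix.vandermonde_mul_of_coeff_apply {R : Type*} [CommRing R] {m : ℕ} (x : Fin m → R)
    (P : Fin m → R[X]) (hP : ∀ j, (P j).natDegree < m) (a b : Fin m) :
    (vandermonde x * of fun (i j : Fin m) => (P j).coeff i) a b = (P b).eval (x a) := by
  rw [mul_apply, eval_eq_sum_range' (hP b), ← Fin.sum_univ_eq_sum_range]
  simp only [vandermonde_apply, of_apply, mul_comm]

theorem Matrix.inv_vandermonde_eq_of_coeff_basis {F : Type*} [Field F] {m : ℕ} {x : Fin m → F}
    (hx : Function.Injective x) :
    (vandermonde x)⁻¹ = of fun (i j : Fin m) => (Lagrange.basis univ x j).coeff i := by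
  have hvs : Set.InjOn x (univ : Finset (Fin m)) := hx.injOn
  refine inv_eq_right_inv (ext fun a b => ?_)
  have hdeg (j : Fin m) : (Lagrange.basis univ x j).natDegree < m := by
    rw [natDegree_basis hvs (mem_univ j), card_univ, Fintype.card_fin]
    exact Nat.sub_lt j.pos one_pos
  rw [vandermonde_mul_of_coeff_apply x _ hdeg]
  by_cases hab : a = b
  · subst hab
    rw [eval_basis_self hvs (mem_univ a), one_apply_eq]
  · rw [eval_basis_of_ne (Ne.symm hab) (mem_univ a), one_apply_ne hab]

/-- the entries of the inverse of the Vandermonde matrix: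
`w_{ij} = (-1)^{n-i} e_{n-i}(x̂_j) / ∏_{k≠j}(x_j - x_k)` (size `n+1`, `0`-based). -/
theorem stmt5 {F : Type*} [Field F] (n : ℕ) (x : Fin (n+1) → F)
    (hx : Function.Injective x) (i j : Fin (n+1)) :
    (Matrix.vandermonde x)⁻¹ i j
      = (-1 : F) ^ (n - (i : ℕ)) * esymmAux (x ∘ j.succAbove) (n - (i : ℕ)) /
          ∏ k ∈ Finset.univ.erase j, (x j - x k) := by
  rw [inv_vandermonde_eq_of_coeff_basis hx, of_apply, basis_eq_C_nodalWeight_mul_nodal_erase,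
    coeff_C_mul, coeff_nodal_univ_erase x j i.is_le, nodalWeight,
    prod_inv_distrib, div_eq_inv_mul]
end

section
/- Let 0 < k_1 < k_2 < ... < k_n be integers and x_1,...,x_n elements of a commutative ring. Let V(k_1,...,k_n) be the generalized Vandermonde matrix with (i,j) entry x_i^{k_j - 1}. Then det V(k_1,...,k_n) = sgn(M) · det Q · det V(x_1,...,x_n), where sgn(M) = (-1)^{n(n-1)/2 + Σ_{i=1}^{n-1} k_i}, V(x_1,...,x_n) is the ordinary Vandermonde matrix, and Q is the square matrix of order k_n - n obtained from the k_n × (k_n + 1 - n) banded matrix P (whose column j has entries (-1)^{n-t} e_{n-t+1} in rows j, j+1, ..., j+n-1 for t = n, n-1, ..., 1, and entry -1 in row n+j) by deleting the rows with indices k_1, k_2, ..., k_{n-1}. -/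
/-!
Let `A = (x_i ^ t)` be the `m × K` power matrix and `C` the `K × l` matrix whose `j`-th column
holds the coefficients of `X ^ j * p`, where `p = ∏ (X - x_i)`; since `p (x_i) = 0`, `A * C = 0`.
Complete `A` by the unit rows at the positions not among the exponents `k_j - 1`, and `C` by the
first `m` unit columns. Their product is block triangular with diagonal blocks `V(x)` and the
minor `-Q` of `C`. The second factor is unitriangular because `p` is monic of degree `m`, and the
first one becomes block triangular with diagonal blocks `V(k)` and `1` after the shuffle that puts
the exponent columns first. The shuffle has `∑ (k_j - 1 - j)` inversions, which together with the
sign of `-Q` gives the sign in the theorem.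
-/

open Equiv Finset Matrix Polynomial

namespace Equiv.Perm

theorem sign_eq_neg_one_pow_card_inversions {N : ℕ} (σ : Perm (Fin N)) :
    sign σ = (-1) ^ #{p : Fin N × Fin N | p.1 < p.2 ∧ σ p.2 < σ p.1} := by
  calc sign σ = ∏ i, ∏ j ∈ Ioi i, (if σ i < σ j then 1 else -1) := sign_eq_prod_prod_Ioi σ
    _ = ∏ p : Fin N × Fin N, if p.1 < p.2 ∧ σ p.2 < σ p.1 then -1 else 1 := by
      rw [Fintype.prod_prod_type]
      refine prod_congr rfl fun i _ => ?_
      rw [← filter_lt_eq_Ioi, prod_filter]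
      refine prod_congr rfl fun j _ => ?_
      by_cases hij : i < j
      · rcases lt_or_gt_of_ne (σ.injective.ne hij.ne) with h | h <;> simp [hij, h, h.not_gt]
      · simp [hij]
    _ = _ := by rw [prod_ite, prod_const_one, prod_const, mul_one]

theorem sign_trans_symm_eq_neg_one_pow_card {ι : Type*} [Fintype ι] [DecidableEq ι] {N : ℕ}
    (e τ : ι ≃ Fin N) :
    sign (e.trans τ.symm) = (-1) ^ #{q : ι × ι | e q.1 < e q.2 ∧ τ q.2 < τ q.1} := by
  have hconj : sign (e.trans τ.symm) = sign (e.symm.trans τ) := by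
    rw [← sign_symm, ← sign_symm_trans_trans _ e]
    congr 1
    ext t
    simp
  rw [hconj, sign_eq_neg_one_pow_card_inversions]
  congr 1
  refine card_bij' (fun p _ => (e.symm p.1, e.symm p.2)) (fun q _ => (e q.1, e q.2)) ?_ ?_ ?_ ?_
    <;> simp only [mem_filter, mem_univ, true_and] <;> simp

end Equiv.Perm

theorem Finset.card_filter_sum_type {α β : Type*} [Fintype α] [Fintype β]
    (p : α ⊕ β → Prop) [DecidablePred p] :
    #{c | p c} = #{a | p (Sum.inl a)} + #{b | p (Sum.inr b)} := by
  simp only [card_filter, Fintype.sum_sum_type]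

theorem card_filter_inr_lt_inl_add {m l N : ℕ} (τ : Fin m ⊕ Fin l ≃ Fin N)
    (hτ : StrictMono (τ ∘ Sum.inl)) (i : Fin m) :
    #{s | τ (Sum.inr s) < τ (Sum.inl i)} + i = τ (Sum.inl i) := by
  have hall : #{c | τ c < τ (Sum.inl i)} = τ (Sum.inl i) := by
    rw [card_equiv τ (t := {u | u < τ (Sum.inl i)}) (by simp), filter_gt_eq_Iio, Fin.card_Iio]
  have hleft : #{j : Fin m | τ (Sum.inl j) < τ (Sum.inl i)} = i := by
    simp_rw [← Function.comp_apply (f := τ) (g := Sum.inl), hτ.lt_iff_lt, filter_gt_eq_Iio,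
      Fin.card_Iio]
  rw [← hall, card_filter_sum_type, hleft, add_comm]

theorem card_inversions_eq_card_filter_inr_lt_inl {α β γ : Type*} [Fintype α] [Fintype β]
    [LinearOrder α] [LinearOrder β] [LinearOrder γ] (e τ : α ⊕ β ≃ γ)
    (he₁ : StrictMono (e ∘ Sum.inl)) (he₂ : StrictMono (e ∘ Sum.inr))
    (he : ∀ a b, e (Sum.inl a) < e (Sum.inr b))
    (hτ₁ : StrictMono (τ ∘ Sum.inl)) (hτ₂ : StrictMono (τ ∘ Sum.inr)) :
    #{q : (α ⊕ β) × (α ⊕ β) | e q.1 < e q.2 ∧ τ q.2 < τ q.1} =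
      #{p : α × β | τ (Sum.inr p.2) < τ (Sum.inl p.1)} := by
  symm
  refine card_bij (fun p _ => (Sum.inl p.1, Sum.inr p.2)) ?_ ?_ ?_
  · intro p hp
    simp only [mem_filter, mem_univ, true_and] at hp ⊢
    exact ⟨he _ _, hp⟩
  · intro p _ q _ h
    simpa [Prod.ext_iff] using h
  · rintro ⟨a | b, a' | b'⟩ hq <;> simp only [mem_filter, mem_univ, true_and] at hq
    · exact absurd ((he₁.lt_iff_lt.mp hq.1).trans (hτ₁.lt_iff_lt.mp hq.2)) (lt_irrefl _)
    · exact ⟨(a, b'), by simpa using hq.2, rfl⟩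
    · exact absurd hq.1 (he _ _).not_gt
    · exact absurd ((he₂.lt_iff_lt.mp hq.1).trans (hτ₂.lt_iff_lt.mp hq.2)) (lt_irrefl _)

/-- The `i`-th element of the first block jumps over `τ (inl i) - i` elements of the second. -/
theorem sign_finSumFinEquiv_trans_symm {m l : ℕ} (τ : Fin m ⊕ Fin l ≃ Fin (m + l))
    (hτ₁ : StrictMono (τ ∘ Sum.inl)) (hτ₂ : StrictMono (τ ∘ Sum.inr)) :
    Perm.sign (finSumFinEquiv.trans τ.symm) = (-1) ^ ∑ i, ((τ (Sum.inl i) : ℕ) - i) := by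
  rw [Perm.sign_trans_symm_eq_neg_one_pow_card,
    card_inversions_eq_card_filter_inr_lt_inl finSumFinEquiv τ (Fin.strictMono_castAdd l)
      (Fin.strictMono_natAdd m) (fun a b => by simp [Fin.lt_def]; omega) hτ₁ hτ₂,
    card_filter, Fintype.sum_prod_type]
  congr 1
  refine sum_congr rfl fun i _ => ?_
  rw [← card_filter, ← card_filter_inr_lt_inl_add τ hτ₁ i, Nat.add_sub_cancel]

namespace Matrix

variable {R : Type*} [CommRing R] {m l n : Type*} [Fintype m] [Fintype l]
  [DecidableEq m] [DecidableEq l] [DecidableEq n]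

theorem det_fromRows_one_submatrix (A : Matrix m n R) (τ : m ⊕ l ≃ n) :
    ((fromRows A ((1 : Matrix n n R).submatrix (τ ∘ Sum.inr) id)).submatrix id τ).det =
      (A.submatrix id (τ ∘ Sum.inl)).det := by
  have : (fromRows A ((1 : Matrix n n R).submatrix (τ ∘ Sum.inr) id)).submatrix id τ =
      fromBlocks (A.submatrix id (τ ∘ Sum.inl)) (A.submatrix id (τ ∘ Sum.inr)) 0 1 := by
    ext (_ | _) (_ | _) <;> simp [one_apply]
  rw [this, det_fromBlocks_zero₂₁, det_one, mul_one]

theorem det_fromCols_one_submatrix (C : Matrix n l R) (e : m ⊕ l ≃ n) :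
    ((fromCols ((1 : Matrix n n R).submatrix id (e ∘ Sum.inl)) C).submatrix e id).det =
      (C.submatrix (e ∘ Sum.inr) id).det := by
  have : (fromCols ((1 : Matrix n n R).submatrix id (e ∘ Sum.inl)) C).submatrix e id =
      fromBlocks 1 (C.submatrix (e ∘ Sum.inl) id) 0 (C.submatrix (e ∘ Sum.inr) id) := by
    ext (_ | _) (_ | _) <;> simp [one_apply]
  rw [this, det_fromBlocks_zero₂₁, det_one, one_mul]

/-- The product of `A` completed by the unit rows `τ ∘ inr` with `C` completed by the unit
columns `e ∘ inl` is block triangular, with diagonal blocks the two minors on the right. -/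
theorem sign_mul_det_mul_det_of_mul_eq_zero [Fintype n] (A : Matrix m n R) (C : Matrix n l R)
    (hAC : A * C = 0) (e τ : m ⊕ l ≃ n) :
    Perm.sign (e.trans τ.symm) * (A.submatrix id (τ ∘ Sum.inl)).det *
        (C.submatrix (e ∘ Sum.inr) id).det =
      (A.submatrix id (e ∘ Sum.inl)).det * (C.submatrix (τ ∘ Sum.inr) id).det := by
  set W := fromRows A ((1 : Matrix n n R).submatrix (τ ∘ Sum.inr) id)
  set N := fromCols ((1 : Matrix n n R).submatrix id (e ∘ Sum.inl)) C
  have hWN : W * N = fromBlocks (A.submatrix id (e ∘ Sum.inl)) 0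
      ((1 : Matrix n n R).submatrix (τ ∘ Sum.inr) (e ∘ Sum.inl))
      (C.submatrix (τ ∘ Sum.inr) id) := by
    have hA :
        A * (1 : Matrix n n R).submatrix id (e ∘ Sum.inl) = A.submatrix id (e ∘ Sum.inl) :=
      mul_submatrix_one (Equiv.refl n) _ A
    have hC :
        (1 : Matrix n n R).submatrix (τ ∘ Sum.inr) id * C = C.submatrix (τ ∘ Sum.inr) id :=
      one_submatrix_mul _ (Equiv.refl n) C
    have h1 : (1 : Matrix n n R).submatrix (τ ∘ Sum.inr) id *
        (1 : Matrix n n R).submatrix id (e ∘ Sum.inl) =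
        (1 : Matrix n n R).submatrix (τ ∘ Sum.inr) (e ∘ Sum.inl) :=
      mul_submatrix_one (Equiv.refl n) _ _
    simp only [W, N, fromRows_mul_fromCols, hAC, hA, hC, h1]
  have hW : W.submatrix id e = (W.submatrix id τ).submatrix id (e.trans τ.symm) := by
    ext; simp
  have := congrArg det (submatrix_mul_equiv W N id e id)
  rw [submatrix_id_id, hWN, det_fromBlocks_zero₁₂, det_mul, hW, det_permute',
    det_fromRows_one_submatrix, det_fromCols_one_submatrix] at this
  rw [← this]

end Matrix

section ShiftedCoeffMatrix

variable {R : Type*} [CommRing R]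

/-- For `p = ∏ (X - C (x i))` this is minus the banded matrix `P` of the paper, with all `K`
rows. -/
noncomputable def shiftedCoeffMatrix (p : R[X]) (K l : ℕ) : Matrix (Fin K) (Fin l) R :=
  of fun t j => (X ^ (j : ℕ) * p).coeff t

theorem pow_mul_shiftedCoeffMatrix_eq_zero {m K l : ℕ} (x : Fin m → R) (p : R[X])
    (hp : ∀ i, p.eval (x i) = 0) (hl : l + p.natDegree ≤ K) :
    (of fun i (t : Fin K) => x i ^ (t : ℕ)) * shiftedCoeffMatrix p K l = 0 := by
  ext i j
  have hdeg : (X ^ (j : ℕ) * p).natDegree < K :=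
    (natDegree_mul_le.trans (Nat.add_le_add_right (natDegree_X_pow_le _) _)).trans_lt (by omega)
  rw [mul_apply, Matrix.zero_apply]
  calc ∑ t : Fin K, x i ^ (t : ℕ) * (X ^ (j : ℕ) * p).coeff (t : ℕ)
      = (X ^ (j : ℕ) * p).eval (x i) := by
        rw [eval_eq_sum_range' hdeg, ← Fin.sum_univ_eq_sum_range]
        simp only [mul_comm]
    _ = 0 := by simp [hp]

theorem det_shiftedCoeffMatrix_submatrix_natAdd {m l : ℕ} (p : R[X]) (hp : p.Monic)
    (hdeg : p.natDegree = m) :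
    ((shiftedCoeffMatrix p (m + l) l).submatrix (Fin.natAdd m) id).det = 1 := by
  rw [det_of_isUpperTriangular]
  · refine prod_eq_one fun s _ => ?_
    simp [shiftedCoeffMatrix, coeff_X_pow_mul', add_comm, ← hdeg, hp.coeff_natDegree]
  · intro b s hsb
    have : p.natDegree < (m + b : ℕ) - s := by
      rw [hdeg]; have := Fin.lt_def.mp hsb; simp only [id] at this; omega
    simp [shiftedCoeffMatrix, coeff_X_pow_mul', coeff_eq_zero_of_natDegree_lt this]

theorem det_pow_eq_det_shiftedCoeffMatrix_mul_det_vandermonde {m l K : ℕ} (x : Fin m → R)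
    (p : R[X]) (hp : p.Monic) (hdeg : p.natDegree = m) (hroot : ∀ i, p.eval (x i) = 0)
    (hK : m + l = K) (τ : Fin m ⊕ Fin l ≃ Fin K)
    (hτ₁ : StrictMono (τ ∘ Sum.inl)) (hτ₂ : StrictMono (τ ∘ Sum.inr)) :
    (of fun i j => x i ^ (τ (Sum.inl j) : ℕ)).det =
      (-1) ^ (∑ i, ((τ (Sum.inl i) : ℕ) - i)) *
        ((shiftedCoeffMatrix p K l).submatrix (τ ∘ Sum.inr) id).det * (vandermonde x).det := by
  subst hK
  have key := sign_mul_det_mul_det_of_mul_eq_zero _ _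
    (pow_mul_shiftedCoeffMatrix_eq_zero x p hroot (by omega)) finSumFinEquiv τ
  have hV : (of fun i (t : Fin (m + l)) => x i ^ (t : ℕ)).submatrix id
      (finSumFinEquiv ∘ Sum.inl) = vandermonde x := by
    ext; simp
  have hN : (shiftedCoeffMatrix p (m + l) l).submatrix (finSumFinEquiv ∘ Sum.inr) id =
      (shiftedCoeffMatrix p (m + l) l).submatrix (Fin.natAdd m) id := by
    ext; simp
  rw [hV, hN, det_shiftedCoeffMatrix_submatrix_natAdd p hp hdeg, mul_one,
    sign_finSumFinEquiv_trans_symm τ hτ₁ hτ₂] at key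
  have hD : (of fun i (t : Fin (m + l)) => x i ^ (t : ℕ)).submatrix id (τ ∘ Sum.inl) =
      of fun i j => x i ^ (τ (Sum.inl j) : ℕ) := rfl
  rw [hD] at key
  push_cast at key
  have hsq : ((-1 : R) ^ ∑ i, ((τ (Sum.inl i) : ℕ) - i)) ^ 2 = 1 := by
    rw [← pow_mul, mul_comm, pow_mul, neg_one_sq, one_pow]
  linear_combination (-1 : R) ^ (∑ i, ((τ (Sum.inl i) : ℕ) - i)) * key -
    (of fun i j => x i ^ (τ (Sum.inl j) : ℕ)).det * hsq

end ShiftedCoeffMatrix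

section Esymm

variable {R : Type*} [CommRing R]

theorem coeff_prod_X_sub_C_eq_esymmAux {m : ℕ} (x : Fin m → R) {d : ℕ} (hd : d ≤ m) :
    (∏ i, (X - C (x i))).coeff d = (-1) ^ (m - d) * esymmAux x (m - d) := by
  have := Multiset.prod_X_sub_C_coeff (univ.val.map x) (k := d) (by simpa using hd)
  simp only [Multiset.map_map, Multiset.card_map, Finset.esymm_map_val, card_val, card_univ,
    Fintype.card_fin] at this
  exact this

theorem band_eq_neg_coeff_X_pow_mul_prod {n : ℕ} (x : Fin (n + 1) → R) (i j : ℕ) :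
    (if j ≤ i ∧ i < j + (n + 1) then (-1 : R) ^ (n - (i - j)) * esymmAux x ((n + 1) - (i - j))
      else if i = j + (n + 1) then -1 else 0) = -(X ^ j * ∏ m, (X - C (x m))).coeff i := by
  nontriviality R
  rw [coeff_X_pow_mul']
  rcases lt_or_ge i j with hij | hji
  · simp [hij.not_ge, show i ≠ j + (n + 1) by omega]
  rw [if_pos hji]
  rcases lt_trichotomy (i - j) (n + 1) with h | h | h
  · rw [if_pos ⟨hji, by omega⟩, coeff_prod_X_sub_C_eq_esymmAux x h.le,
      show n + 1 - (i - j) = n - (i - j) + 1 by omega, pow_succ]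
    ring
  · rw [if_neg (by omega), if_pos (by omega), h, coeff_prod_X_sub_C_eq_esymmAux x le_rfl]
    simp [esymmAux]
  · rw [if_neg (by omega), if_neg (by omega), coeff_eq_zero_of_natDegree_lt (by simpa using h),
      neg_zero]

end Esymm

theorem val_lt_of_strictMono {n : ℕ} {k : Fin (n + 1) → ℕ} (hk0 : 0 < k 0) (hk : StrictMono k)
    (j : Fin (n + 1)) : (j : ℕ) < k j := by
  induction j using Fin.induction with
  | zero => exact hk0
  | succ i ih =>
    have := hk i.castSucc_lt_succ
    simp only [Fin.val_succ, Fin.val_castSucc] at ih ⊢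
    omega

theorem exists_shuffle_of_strictMono {n K : ℕ} {k : Fin (n + 1) → ℕ} (hk0 : 0 < k 0)
    (hk : StrictMono k) (hK : K = k (Fin.last n)) {ρ : Fin (K - (n + 1)) → Fin (K - 1)}
    (hρ : StrictMono ρ)
    (hρk : ∀ s, ∀ i : Fin (n + 1), (i : ℕ) < n → (ρ s : ℕ) + 1 ≠ k i) :
    ∃ τ : Fin (n + 1) ⊕ Fin (K - (n + 1)) ≃ Fin K,
      StrictMono (τ ∘ Sum.inl) ∧ StrictMono (τ ∘ Sum.inr) ∧
      (∀ j, (τ (Sum.inl j) : ℕ) = k j - 1) ∧ ∀ s, (τ (Sum.inr s) : ℕ) = ρ s := by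
  have hkj := val_lt_of_strictMono hk0 hk
  have hkK : ∀ j, k j ≤ K := fun j => hK ▸ hk.monotone (Fin.le_last j)
  have hnK : n < K := by simpa [hK] using hkj (Fin.last n)
  let κ : Fin (n + 1) → Fin K := fun j => ⟨k j - 1, by have := hkj j; have := hkK j; omega⟩
  let ρ' : Fin (K - (n + 1)) → Fin K := Fin.castLE (Nat.sub_le K 1) ∘ ρ
  have hκ : StrictMono κ := fun i j hij => by
    have := hk hij; have := hkj i; simp only [κ, Fin.mk_lt_mk]; omega
  have hρ' : StrictMono ρ' := (Fin.strictMono_castLE _).comp hρ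
  have hdisj : ∀ j s, κ j ≠ ρ' s := by
    intro j s h
    have h' : k j - 1 = ρ s := congrArg Fin.val h
    by_cases hj : (j : ℕ) < n
    · exact hρk s j hj (by have := hkj j; omega)
    · have hjl : j = Fin.last n := Fin.ext (by have := j.isLt; simp; omega)
      have := (ρ s).isLt
      rw [hjl, ← hK] at h'
      omega
  have hbij : Function.Bijective (Sum.elim κ ρ') :=
    (Fintype.bijective_iff_injective_and_card _).2
      ⟨hκ.injective.sumElim hρ'.injective hdisj, by simp; omega⟩
  exact ⟨Equiv.ofBijective _ hbij, hκ, hρ', fun _ => rfl, fun _ => rfl⟩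

theorem neg_one_pow_sum_sub_eq {R : Type*} [Ring R] {n K : ℕ} (k : Fin (n + 1) → ℕ)
    (hk : ∀ j : Fin (n + 1), (j : ℕ) < k j) (hK : K = k (Fin.last n)) :
    (-1 : R) ^ (∑ j : Fin (n + 1), (k j - 1 - j)) =
      (-1) ^ ((n + 1) * n / 2 + ∑ i : Fin n, k (Fin.castSucc i)) * (-1) ^ (K - (n + 1)) := by
  have hsum : ∑ j, k j = ∑ j : Fin (n + 1), ((k j - 1 - j) + ((j : ℕ) + 1)) :=
    sum_congr rfl fun j _ => by have := hk j; omega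
  rw [sum_add_distrib, sum_add_distrib, sum_const, card_univ, Fintype.card_fin, smul_eq_mul,
    mul_one] at hsum
  have hgauss : ∑ j : Fin (n + 1), (j : ℕ) = (n + 1) * n / 2 := by
    rw [Fin.sum_univ_eq_sum_range (fun j => j), sum_range_id, Nat.add_sub_cancel]
  have hlast : ∑ j, k j = ∑ i : Fin n, k (Fin.castSucc i) + K := by
    rw [Fin.sum_univ_castSucc, hK]
  have hnK : n < K := by simpa [hK] using hk (Fin.last n)
  rw [← pow_add, neg_one_pow_eq_pow_mod_two, neg_one_pow_eq_pow_mod_two (n := _ + _)]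
  congr 1
  omega

/-- the generalized Vandermonde determinant.
With `n+1` variables, exponents `0 < k_0 < ⋯ < k_n` and `K = k_n`, we have
`det V(k) = (-1)^{n(n+1)/2 + Σ_{i<n} k_i} · det Q · det V(x)`, where `Q` is obtained
from the banded matrix `P` (with `K-1` rows and `K-(n+1)` columns, column `j` carrying
the coefficients `(-1)^{n-t} e_{n-t+1}` in rows `j, …, j+n` and `-1` in row `j+n+1`,
rows `1`-based) by deleting the rows with (`1`-based) indices `k_0, …, k_{n-1}`;
the strictly monotone map `ρ` enumerates the remaining rows. -/
theorem stmt11 {R : Type*} [CommRing R] (n : ℕ) (k : Fin (n+1) → ℕ)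
    (hk0 : 0 < k 0) (hk : StrictMono k) (x : Fin (n+1) → R)
    (K : ℕ) (hK : K = k (Fin.last n))
    (P : Matrix (Fin (K-1)) (Fin (K-(n+1))) R)
    (hP : ∀ i j, P i j =
      if (j : ℕ) ≤ (i : ℕ) ∧ (i : ℕ) < (j : ℕ) + (n+1) then
        (-1 : R) ^ (n - ((i : ℕ) - (j : ℕ))) * esymmAux x ((n+1) - ((i : ℕ) - (j : ℕ)))
      else if (i : ℕ) = (j : ℕ) + (n+1) then -1 else 0)
    (ρ : Fin (K-(n+1)) → Fin (K-1)) (hρ : StrictMono ρ)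
    (hρk : ∀ s, ∀ i : Fin (n+1), (i : ℕ) < n → (ρ s : ℕ) + 1 ≠ k i) :
    (Matrix.of fun i j : Fin (n+1) => x i ^ (k j - 1)).det
      = (-1 : R) ^ ((n+1) * n / 2 + ∑ i : Fin n, k (Fin.castSucc i)) *
          (P.submatrix ρ id).det * (Matrix.vandermonde x).det := by
  nontriviality R
  have hkj := val_lt_of_strictMono hk0 hk
  have hnK : n < K := by simpa [hK] using hkj (Fin.last n)
  obtain ⟨τ, hτ₁, hτ₂, hτl, hτr⟩ := exists_shuffle_of_strictMono hk0 hk hK hρ hρk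
  have key := det_pow_eq_det_shiftedCoeffMatrix_mul_det_vandermonde x _
    (monic_prod_X_sub_C x univ) (by simp)
    (fun i => by simp [eval_prod, prod_eq_zero (mem_univ i)]) (by omega) τ hτ₁ hτ₂
  simp only [hτl] at key
  have hQ : P.submatrix ρ id =
      -(shiftedCoeffMatrix (∏ m, (X - C (x m))) K _).submatrix (τ ∘ Sum.inr) id := by
    ext s j
    simp [hP, band_eq_neg_coeff_X_pow_mul_prod, shiftedCoeffMatrix, hτr]
  rw [key, neg_one_pow_sum_sub_eq k hkj hK, hQ, det_neg, Fintype.card_fin]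
  ring
end

section
/- Let x_1,...,x_n lie in a commutative ring, e_k = e_k(x_1,...,x_n), and let Q_m be the (m-n)×(m-n) upper-Hessenberg matrix (m > n) with diagonal entries e_1, subdiagonal entries -1, entry (s,t) equal to (-1)^{t-s} e_{t-s+1} for t ≥ s (interpreted as 0 when t-s+1 > n), and zeros below the subdiagonal. Then det Q_m = h_{m-n}(x_1,...,x_n), the complete homogeneous symmetric polynomial of degree m-n. -/
/-- The complete homogeneous symmetric polynomial of degree `d` in `x_0, …, x_{n-1}`. -/
def hsymmAux {R : Type*} [CommRing R] {n : ℕ} (x : Fin n → R) (d : ℕ) : R :=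
  ∑ m ∈ Finset.Nat.antidiagonalTuple n d, ∏ i, x i ^ m i

/-!
The generating series `E(X) = ∏ (1 - x_i X) = ∑ (-1)^k e_k X^k` and
`H(X) = ∏ (1 - x_i X)⁻¹ = ∑ h_d X^d` are mutually inverse. Hence so are the lower-triangular
Toeplitz matrices of their first `d + 1` coefficients, and both have determinant `1`. The
bottom-left entry `h_d` of the `H`-matrix is therefore a cofactor of the `E`-matrix
(Jacobi's complementary minor), and that minor is, up to transposition and a sign `(-1)^d`,
exactly the Hessenberg matrix of the statement.
-/

open Finset PowerSeries Matrix

namespace PowerSeries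

variable {R : Type*} [CommRing R]

/-- The matrix of multiplication by `φ` on `R⟦X⟧ ⧸ (X ^ N)` in the basis `1, X, …, X ^ (N - 1)`. -/
noncomputable def toeplitzMatrix (N : ℕ) (φ : R⟦X⟧) : Matrix (Fin N) (Fin N) R :=
  Matrix.of fun i j => if j ≤ i then coeff ((i : ℕ) - j) φ else 0

theorem toeplitzMatrix_apply (N : ℕ) (φ : R⟦X⟧) (i j : Fin N) :
    toeplitzMatrix N φ i j = if j ≤ i then coeff ((i : ℕ) - j) φ else 0 :=
  rfl

theorem toeplitzMatrix_mul (N : ℕ) (φ ψ : R⟦X⟧) :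
    toeplitzMatrix N (φ * ψ) = toeplitzMatrix N φ * toeplitzMatrix N ψ := by
  ext i j
  simp only [toeplitzMatrix, of_apply, mul_apply, ite_zero_mul_ite_zero, Fin.le_iff_val_le_val]
  rw [Fin.sum_univ_eq_sum_range (fun u => if u ≤ (i : ℕ) ∧ (j : ℕ) ≤ u then
    coeff ((i : ℕ) - u) φ * coeff (u - j) ψ else 0), ← sum_filter]
  split_ifs with hji
  · have hIco : {u ∈ range N | u ≤ (i : ℕ) ∧ (j : ℕ) ≤ u} = Ico (j : ℕ) (i + 1) := by
      ext u; simp only [mem_filter, mem_range, mem_Ico]; omega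
    rw [hIco, sum_Ico_eq_sum_range, mul_comm φ, coeff_mul,
      Nat.sum_antidiagonal_eq_sum_range_succ (fun p q => coeff p ψ * coeff q φ)]
    refine sum_congr (by congr 1; omega) fun k _ => ?_
    rw [mul_comm, Nat.add_sub_cancel_left, Nat.sub_sub]
  · refine (sum_eq_zero fun u hu => ?_).symm
    simp only [mem_filter] at hu
    omega

theorem toeplitzMatrix_one (N : ℕ) : toeplitzMatrix N (1 : R⟦X⟧) = 1 := by
  ext i j
  simp only [toeplitzMatrix, of_apply, coeff_one, one_apply, Fin.ext_iff, Fin.le_iff_val_le_val]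
  split_ifs <;> first | rfl | omega

theorem det_toeplitzMatrix (N : ℕ) (φ : R⟦X⟧) :
    (toeplitzMatrix N φ).det = constantCoeff φ ^ N := by
  have hlower : (toeplitzMatrix N φ).IsLowerTriangular := fun i j hij => if_neg (not_le.mpr hij)
  rw [det_of_isLowerTriangular _ hlower]
  simp [toeplitzMatrix]

theorem coeff_eq_det_toeplitzMatrix_submatrix {φ ψ : R⟦X⟧} (h : φ * ψ = 1)
    (hφ : constantCoeff φ = 1) (d : ℕ) :
    coeff d ψ = (-1) ^ d * ((toeplitzMatrix (d + 1) φ).submatrix Fin.succ Fin.castSucc).det := by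
  set A := toeplitzMatrix (d + 1) φ
  have hAB : A * toeplitzMatrix (d + 1) ψ = 1 := by
    rw [← toeplitzMatrix_mul, h, toeplitzMatrix_one]
  have hadj : A.adjugate = toeplitzMatrix (d + 1) ψ := by
    calc A.adjugate = A.adjugate * A * toeplitzMatrix (d + 1) ψ := by rw [mul_assoc, hAB, mul_one]
      _ = toeplitzMatrix (d + 1) ψ := by
        rw [adjugate_mul, det_toeplitzMatrix, hφ, one_pow, one_smul, one_mul]
  have := adjugate_fin_succ_eq_det_submatrix A (Fin.last d) 0
  rw [hadj, Fin.succAbove_zero, Fin.succAbove_last] at this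
  simpa [toeplitzMatrix] using this

theorem coeff_prod_one_add_C_mul_X {ι : Type*} (s : Finset ι) (y : ι → R) (k : ℕ) :
    coeff k (∏ i ∈ s, (1 + C (y i) * X)) = ∑ t ∈ s.powersetCard k, ∏ i ∈ t, y i := by
  simp only [prod_one_add, prod_mul_distrib, prod_const, ← map_prod, map_sum, coeff_C_mul_X_pow]
  rw [← sum_filter, powersetCard_eq_filter]
  simp_rw [eq_comm]

theorem one_sub_C_mul_X_mul_mk_pow (a : R) : (1 - C a * X) * mk (a ^ ·) = 1 := by
  have h := congrArg (rescale a) (mk_one_mul_one_sub_eq_one (S := R))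
  simpa only [map_mul, map_sub, map_one, rescale_X, rescale_mk, Pi.one_apply, mul_one,
    mul_comm] using h

end PowerSeries

section

variable {R : Type*} [CommRing R] {n : ℕ}

theorem coeff_prod_one_sub_C_mul_X_eq_esymmAux (x : Fin n → R) (k : ℕ) :
    coeff k (∏ i, (1 - C (x i) * X)) = (-1) ^ k * esymmAux x k := by
  simp_rw [sub_eq_add_neg, ← neg_mul, ← map_neg, coeff_prod_one_add_C_mul_X, esymmAux, mul_sum]
  refine sum_congr rfl fun t ht => ?_
  rw [prod_neg, (mem_powersetCard.mp ht).2]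

theorem coeff_prod_mk_pow_eq_hsymmAux (x : Fin n → R) (d : ℕ) :
    coeff d (∏ i, mk (x i ^ ·)) = hsymmAux x d := by
  rw [coeff_prod, finsuppAntidiag, sum_map, hsymmAux, ← piAntidiag_univ_fin_eq_antidiagonalTuple,
    ← sum_attach (univ.piAntidiag d)]
  simp only [coeff_mk]
  rfl

end

theorem stmt13_general {R : Type*} [CommRing R] (n m : ℕ) (x : Fin n → R) :
    (Matrix.of fun s t : Fin (m-n) =>
        if (s : ℕ) = (t : ℕ) + 1 then (-1 : R)
        else if (s : ℕ) ≤ (t : ℕ) then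
          (-1 : R) ^ ((t : ℕ) - (s : ℕ)) * esymmAux x ((t : ℕ) - (s : ℕ) + 1)
        else 0).det
      = hsymmAux x (m - n) := by
  set E : R⟦X⟧ := ∏ i, (1 - C (x i) * X)
  have hE : constantCoeff E = 1 := by simp [E]
  have hEH : E * ∏ i, mk (x i ^ ·) = 1 := by
    rw [← prod_mul_distrib]
    exact prod_eq_one fun i _ => one_sub_C_mul_X_mul_mk_pow _
  calc _ = (-((toeplitzMatrix (m - n + 1) E).submatrix Fin.succ Fin.castSucc)ᵀ).det := by
        congr 1
        ext s t
        rw [neg_apply, transpose_apply, submatrix_apply, toeplitzMatrix_apply, of_apply,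
          coeff_prod_one_sub_C_mul_X_eq_esymmAux]
        simp only [Fin.le_iff_val_le_val, Fin.val_succ, Fin.val_castSucc]
        split_ifs with hsub <;> try omega
        · simp [hsub, esymmAux]
        · rw [show (t : ℕ) + 1 - s = t - s + 1 by omega, pow_succ]
          ring
        · rw [neg_zero]
    _ = hsymmAux x (m - n) := by
      rw [det_neg, det_transpose, Fintype.card_fin, ← coeff_prod_mk_pow_eq_hsymmAux,
        coeff_eq_det_toeplitzMatrix_submatrix hEH hE]

/-- the `(m-n)×(m-n)` upper-Hessenberg matrix with entries
`(-1)^{t-s} e_{t-s+1}` on and above the diagonal and `-1` on the subdiagonal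
has determinant `h_{m-n}` (note `esymmAux x d = 0` for `d > n`). -/
theorem stmt13 {R : Type*} [CommRing R] (n m : ℕ) (hm : n < m) (x : Fin n → R) :
    (Matrix.of fun s t : Fin (m-n) =>
        if (s : ℕ) = (t : ℕ) + 1 then (-1 : R)
        else if (s : ℕ) ≤ (t : ℕ) then
          (-1 : R) ^ ((t : ℕ) - (s : ℕ)) * esymmAux x ((t : ℕ) - (s : ℕ) + 1)
        else 0).det
      = hsymmAux x (m - n) :=
  stmt13_general n m x
end

section
/- Let A be an n×n matrix over a field with columns A_1,...,A_n, let r ≥ 1, and let P = (p_{i,j}) be the (n+r-1)×r matrix with p_{n+j, j} = -1 and p_{i,j} = 0 for i > n+j, used to define columns A_{n+j} = Σ_{i=1}^{n+j-1} p_{i,j} A_i for j = 1,...,r. For any sequence 1 ≤ j_1 < j_2 < ... < j_r < n+r, let M be the n×n minor of the n×(n+r) matrix [A | A_{n+1} | ... | A_{n+r}] obtained by deleting columns j_1,...,j_r, and let Q be the r×r submatrix of P formed by rows j_1,...,j_r. Then M = (-1)^{nr + j_1 + ... + j_r + r(r-1)/2} · det Q · det A. -/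
/-!
The columns of `[A | A_{n+1} | ⋯ | A_{n+r}]` form an `n × (n+r)` matrix `N` with `N P̂ = 0`,
where `P̂` is `P` completed by the `-1`'s and zeros of the recursion. Stacking the unit rows
`e_{j_1}, …, e_{j_r}` under `N` gives a square matrix `S`; Laplace expansion along the unit
rows, from the last one up, gives `det S = (-1)^{Σ_i (n + i + j_i)} M`. On the other hand
`S · [e_1 ⋯ e_n | P̂]` is block lower triangular with diagonal blocks `A` and `Q` (because
`N P̂ = 0`), while `[e_1 ⋯ e_n | P̂]` is upper triangular with diagonal `1, …, 1, -1, …, -1`.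
-/

theorem Fin.exists_strictMono_succAbove_comp_eq {m k : ℕ} (p : Fin (m + 1))
    {f : Fin k → Fin (m + 1)} (hf : StrictMono f) (hp : ∀ i, f i ≠ p) :
    ∃ g : Fin k → Fin m, StrictMono g ∧ p.succAbove ∘ g = f := by
  choose g hg using fun i => Fin.exists_succAbove_eq (hp i)
  refine ⟨g, fun a b hab => (Fin.succAbove_lt_succAbove_iff (p := p)).1 ?_, funext hg⟩
  rw [hg a, hg b]
  exact hf hab

namespace Matrix

variable {R : Type*} [CommRing R] {n r : ℕ}

def appendUnitRows (N : Matrix (Fin n) (Fin (n + r)) R) (J : Fin r → Fin (n + r)) :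
    Matrix (Fin (n + r)) (Fin (n + r)) R :=
  of (Fin.append (fun a => N a) fun i => Pi.single (J i) 1)

theorem appendUnitRows_last {J : Fin (r + 1) → Fin (n + r + 1)}
    (N : Matrix (Fin n) (Fin (n + r + 1)) R) (w : Fin (n + r + 1)) :
    appendUnitRows N J (Fin.last (n + r)) w
      = (Pi.single (J (Fin.last r)) 1 : Fin (n + r + 1) → R) w := by
  rw [appendUnitRows, of_apply, ← Fin.natAdd_last, Fin.append_right]

theorem appendUnitRows_submatrix_succAbove (N : Matrix (Fin n) (Fin (n + r + 1)) R)
    {J : Fin (r + 1) → Fin (n + r + 1)} {p : Fin (n + r + 1)} {J' : Fin r → Fin (n + r)}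
    (hJ' : ∀ i, p.succAbove (J' i) = J i.castSucc) :
    (appendUnitRows N J).submatrix (Fin.last (n + r)).succAbove p.succAbove
      = appendUnitRows (N.submatrix id p.succAbove) J' := by
  ext z w
  refine Fin.addCases (fun a => ?_) (fun i => ?_) z
  · simp only [appendUnitRows, submatrix_apply, of_apply, Fin.succAbove_last,
      Fin.castSucc_castAdd]
    rw [Fin.append_left, Fin.append_left]
    rfl
  · simp only [appendUnitRows, submatrix_apply, of_apply, Fin.succAbove_last,
      Fin.castSucc_natAdd]
    rw [Fin.append_right, Fin.append_right, ← hJ', Pi.single_apply, Pi.single_apply]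
    simp only [Fin.succAbove_right_inj]

theorem det_appendUnitRows (N : Matrix (Fin n) (Fin (n + r)) R)
    {J : Fin r → Fin (n + r)} (hJ : StrictMono J)
    {κ : Fin n → Fin (n + r)} (hκ : StrictMono κ) (hdisj : ∀ a i, κ a ≠ J i) :
    (appendUnitRows N J).det = (-1) ^ (∑ i, (n + i + J i : ℕ)) * (N.submatrix id κ).det := by
  induction r with
  | zero =>
    rw [hκ.eq_id]
    simp only [Finset.univ_eq_empty, Finset.sum_empty, pow_zero, one_mul]
    congr 1
    ext a b
    simp only [appendUnitRows, of_apply, submatrix_apply, id]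
    rw [Fin.append_right_nil _ _ rfl]
    rfl
  | succ r ih =>
    set t : Fin (n + r + 1) := J (Fin.last r)
    have hlt : ∀ i : Fin r, J i.castSucc < t := fun i => hJ (Fin.castSucc_lt_last i)
    obtain ⟨J', hJ', hJJ'⟩ := Fin.exists_strictMono_succAbove_comp_eq t
      (hJ.comp Fin.strictMono_castSucc) fun i => (hlt i).ne
    obtain ⟨κ', hκ', hκκ'⟩ := Fin.exists_strictMono_succAbove_comp_eq t hκ
      fun a => hdisj a (Fin.last r)
    have hJJ'i : ∀ i, t.succAbove (J' i) = J i.castSucc := congrFun hJJ'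
    have hdisj' : ∀ a i, κ' a ≠ J' i := fun a i h => hdisj a i.castSucc <| by
      rw [← congrFun hκκ' a, ← hJJ'i, Function.comp_apply, h]
    have hval : ∀ i, (J' i : ℕ) = J i.castSucc := by
      intro i
      have hc : (J' i).castSucc < t :=
        (Fin.succAbove_lt_iff_castSucc_lt t _).1 (hJJ'i i ▸ hlt i)
      rw [← hJJ'i, Fin.succAbove_of_castSucc_lt t _ hc, Fin.val_castSucc]
    rw [det_succ_row _ (Fin.last (n + r)), Finset.sum_eq_single t, appendUnitRows_last,
      Pi.single_eq_same, appendUnitRows_submatrix_succAbove N hJJ'i, ih _ hJ' hκ' hdisj',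
      submatrix_submatrix, Function.id_comp, hκκ', Fin.sum_univ_castSucc]
    · simp only [Fin.val_last, Fin.val_castSucc, ← hval, pow_add, t]
      ring
    · intro w _ hw
      rw [appendUnitRows_last, Pi.single_eq_of_ne hw, mul_zero, zero_mul]
    · exact fun h => absurd (Finset.mem_univ t) h

theorem det_appendUnitRows_mul_det (N : Matrix (Fin n) (Fin (n + r)) R)
    (J : Fin r → Fin (n + r)) (K : Matrix (Fin (n + r)) (Fin r) R) (hNK : N * K = 0) :
    (appendUnitRows N J).det * (K.submatrix (Fin.natAdd n) id).det
      = (N.submatrix id (Fin.castAdd r)).det * (K.submatrix J id).det := by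
  let e : Fin n ⊕ Fin r ≃ Fin (n + r) := finSumFinEquiv
  have hsplit : ∀ (v : Fin (n + r) → R) (j : Fin r), ∑ z, v z * K z j
      = ∑ b, v (Fin.castAdd r b) * K (Fin.castAdd r b) j
        + ∑ k, v (Fin.natAdd n k) * K (Fin.natAdd n k) j := fun v j => Fin.sum_univ_add _
  have hprod : (appendUnitRows N J).submatrix e e
        * fromBlocks 1 (K.submatrix (Fin.castAdd r) id) 0 (K.submatrix (Fin.natAdd n) id)
      = fromBlocks (N.submatrix id (Fin.castAdd r)) 0
          (of fun i b => (Pi.single (J i) 1 : Fin (n + r) → R) (Fin.castAdd r b))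
          (K.submatrix J id) := by
    ext (a | i) (b | j)
    all_goals simp only [e, appendUnitRows, mul_apply, Fintype.sum_sum_type, submatrix_apply,
      of_apply, fromBlocks_apply₁₁, fromBlocks_apply₁₂, fromBlocks_apply₂₁, fromBlocks_apply₂₂,
      finSumFinEquiv_apply_left, finSumFinEquiv_apply_right, Fin.append_left, Fin.append_right,
      id, Matrix.zero_apply, mul_zero, Finset.sum_const_zero, add_zero]
    · simp [one_apply]
    · rw [← hsplit, ← mul_apply, hNK, Matrix.zero_apply]
    · simp [one_apply]
    · rw [← hsplit]
      simp [Pi.single_apply]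
  simpa only [det_mul, det_submatrix_equiv_self, det_fromBlocks_zero₂₁, det_one, one_mul,
    det_fromBlocks_zero₁₂] using congrArg det hprod

end Matrix

section ExtendedCoeff

open Matrix

variable {R : Type*} [CommRing R] {n r : ℕ}

/-- The paper's `P` with the missing last row `n + r - 1` added; the conventions `p_{n+j,j} = -1`
and `p_{i,j} = 0` for `i > n + j` (0-based) are built in, so only entries above them come from
`P`. -/
def extendedCoeff (P : Matrix (Fin (n + r - 1)) (Fin r) R) : Matrix (Fin (n + r)) (Fin r) R :=
  of fun z j =>
    if h : (z : ℕ) < n + j then P ⟨z, by omega⟩ j else if (z : ℕ) = n + j then -1 else 0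

theorem extendedCoeff_apply_of_lt (P : Matrix (Fin (n + r - 1)) (Fin r) R)
    (hPdiag : ∀ j : Fin r, ∀ h : n + (j : ℕ) < n + r - 1, P ⟨n + (j : ℕ), h⟩ j = -1)
    (hP0 : ∀ (i : Fin (n + r - 1)) (j : Fin r), n + (j : ℕ) < (i : ℕ) → P i j = 0)
    (z : Fin (n + r)) (hz : (z : ℕ) < n + r - 1) (j : Fin r) :
    extendedCoeff P z j = P ⟨z, hz⟩ j := by
  rw [extendedCoeff, of_apply]
  split_ifs with hlt heq
  · rfl
  · simp only [← hPdiag j (heq ▸ hz), ← heq]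
  · exact (hP0 ⟨z, hz⟩ j (show n + (j : ℕ) < z by omega)).symm

theorem det_extendedCoeff_submatrix_natAdd (P : Matrix (Fin (n + r - 1)) (Fin r) R) :
    ((extendedCoeff P).submatrix (Fin.natAdd n) id).det = (-1) ^ r := by
  rw [det_of_isUpperTriangular]
  · simp [extendedCoeff]
  · intro i j hji
    rw [Fin.lt_def, id_eq, id_eq] at hji
    simp only [extendedCoeff, submatrix_apply, of_apply, Fin.val_natAdd, id_eq]
    rw [dif_neg (by omega), if_neg (by omega)]

theorem mul_extendedCoeff_eq_zero (P : Matrix (Fin (n + r - 1)) (Fin r) R) (C : ℕ → Fin n → R)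
    (hC : ∀ j : Fin r, ∀ a, C (n + (j : ℕ)) a =
      ∑ i : Fin (n + (j : ℕ)), P (Fin.castLE (by omega) i) j * C (i : ℕ) a) :
    (of fun a (z : Fin (n + r)) => C z a) * extendedCoeff P = 0 := by
  ext a j
  let g : ℕ → R := fun i =>
    C i a * if h : i < n + j then P ⟨i, by omega⟩ j else if i = n + j then -1 else 0
  have htail : ∑ i ∈ Finset.range (n + r), g i = ∑ i ∈ Finset.range (n + j + 1), g i := by
    refine (Finset.sum_subset (Finset.range_subset_range.2 (by omega)) fun i _ hi => ?_).symm
    rw [Finset.mem_range] at hi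
    simp only [g, dif_neg (show ¬i < n + j by omega), if_neg (show i ≠ n + j by omega), mul_zero]
  have hhead : ∑ i ∈ Finset.range (n + j), g i
      = ∑ i : Fin (n + (j : ℕ)), P (Fin.castLE (by omega) i) j * C (i : ℕ) a := by
    rw [← Fin.sum_univ_eq_sum_range]
    refine Finset.sum_congr rfl fun i _ => ?_
    simp only [g, dif_pos i.isLt, mul_comm]
    rfl
  rw [mul_apply, Matrix.zero_apply]
  change ∑ z : Fin (n + r), g z = 0
  rw [Fin.sum_univ_eq_sum_range g, htail, Finset.sum_range_succ, hhead, ← hC j a]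
  simp [g]

end ExtendedCoeff

/-- the main theorem. `C : ℕ → Fin n → F` gives the columns of the
block matrix `[A | A_{n+1} | ⋯ | A_{n+r}]`: `C i` is the `i`-th column of `A` for
`i < n`, and `C (n+j) = Σ_{i<n+j} p_{i,j} C i`, where `P` has `-1` at (`0`-based)
entry `(n+j, j)` and `0` below. `J` enumerates (strictly monotonically) the `r`
deleted column indices, none equal to the last column, and `κ` enumerates the `n`
kept columns. Then `M = (-1)^{nr + Σ(j_i) + r(r-1)/2} · det Q · det A`, where `Q`
consists of the rows of `P` indexed by the deleted columns. -/
theorem stmt15 {F : Type*} [Field F] (n r : ℕ) (hr : 1 ≤ r)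
    (A : Matrix (Fin n) (Fin n) F) (P : Matrix (Fin (n+r-1)) (Fin r) F)
    (hPdiag : ∀ j : Fin r, ∀ h : n + (j : ℕ) < n + r - 1, P ⟨n + (j : ℕ), h⟩ j = -1)
    (hP0 : ∀ (i : Fin (n+r-1)) (j : Fin r), n + (j : ℕ) < (i : ℕ) → P i j = 0)
    (C : ℕ → Fin n → F)
    (hC1 : ∀ i : Fin n, ∀ a, C (i : ℕ) a = A a i)
    (hC2 : ∀ j : Fin r, ∀ a, C (n + (j : ℕ)) a =
      ∑ i : Fin (n + (j : ℕ)), P (Fin.castLE (by omega) i) j * C (i : ℕ) a)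
    (J : Fin r → Fin (n + r)) (hJ : StrictMono J)
    (hJlt : ∀ i, (J i : ℕ) < n + r - 1)
    (κ : Fin n → Fin (n + r)) (hκ : StrictMono κ)
    (hdisj : ∀ a b, κ a ≠ J b) :
    (Matrix.of fun a b : Fin n => C (κ b : ℕ) a).det
      = (-1 : F) ^ (n * r + (∑ i, ((J i : ℕ) + 1)) + r * (r - 1) / 2) *
          (P.submatrix (fun i : Fin r => (⟨(J i : ℕ), hJlt i⟩ : Fin (n+r-1))) id).det *
          A.det := by
  let N : Matrix (Fin n) (Fin (n + r)) F := Matrix.of fun a z => C z a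
  change (N.submatrix id κ).det = _
  have hA : N.submatrix id (Fin.castAdd r) = A := Matrix.ext fun a b => hC1 b a
  have hQ : (extendedCoeff P).submatrix J id
      = P.submatrix (fun i : Fin r => (⟨(J i : ℕ), hJlt i⟩ : Fin (n+r-1))) id :=
    Matrix.ext fun i j => extendedCoeff_apply_of_lt P hPdiag hP0 (J i) (hJlt i) j
  have key := Matrix.det_appendUnitRows_mul_det N J _ (mul_extendedCoeff_eq_zero P C hC2)
  rw [Matrix.det_appendUnitRows N hJ hκ hdisj, det_extendedCoeff_submatrix_natAdd, hA, hQ] at key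
  have hexp : n * r + (∑ i, ((J i : ℕ) + 1)) + r * (r - 1) / 2 = ∑ i, (n + i + J i : ℕ) + r := by
    simp only [Finset.sum_add_distrib, Finset.sum_const, Finset.card_univ, Fintype.card_fin,
      smul_eq_mul, Fin.sum_univ_eq_sum_range (fun i => i), Finset.sum_range_id]
    ring
  have hsq : ((-1 : F) ^ (∑ i, (n + i + J i : ℕ) + r)) ^ 2 = 1 := by
    rw [← pow_mul, pow_mul', neg_one_sq, one_pow]
  rw [hexp]
  linear_combination (-1 : F) ^ (∑ i, (n + i + J i : ℕ) + r) * key - (N.submatrix id κ).det * hsq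
end
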